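/- Define rational functions recursively by T^0_1 = a, U^0_1 = -1, T^0_2 = 1, U^0_2 = a - 2, and for k ≥ 1: T^0_{2k+1} = a·(U^0_{2k})^2, U^0_{2k+1} = T^0_{2k}·(T^0_{2k} + 2U^0_{2k}), T^0_{2k+2} = (T^0_{2k})^2·(T^0_{2k} + 2U^0_{2k})^2, and U^0_{2k+2} = (U^0_{2k})^2·(a·(U^0_{2k})^2 + 2(T^0_{2k})^2 + 4T^0_{2k}U^0_{2k}). Then for all k ≥ 1, deg U^0_{2k} = (2^{2k} - 1)/3 and deg T^0_{2k+1} = (2^{2k+1} + 1)/3. -/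
import Mathlib


open Polynomial

/-- `TUeven k = (T⁰_{2k+2}, U⁰_{2k+2})`, polynomials in `a = X`. -/
noncomputable def TUeven : ℕ → Polynomial ℤ × Polynomial ℤ
  | 0 => (1, X - 2)
  | (k + 1) =>
      ((TUeven k).1 ^ 2 * ((TUeven k).1 + 2 * (TUeven k).2) ^ 2,
       (TUeven k).2 ^ 2 *
         (X * (TUeven k).2 ^ 2 + 2 * (TUeven k).1 ^ 2 + 4 * (TUeven k).1 * (TUeven k).2))

/-- `TU m = (T⁰_m, U⁰_m)` for `m ≥ 1`:  `T⁰_1 = a`, `U⁰_1 = -1`, `T⁰_2 = 1`,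
`U⁰_2 = a - 2`, `T⁰_{2k+1} = a·(U⁰_{2k})²`, `U⁰_{2k+1} = T⁰_{2k}(T⁰_{2k} + 2U⁰_{2k})`,
`T⁰_{2k+2} = (T⁰_{2k})²(T⁰_{2k} + 2U⁰_{2k})²`,
`U⁰_{2k+2} = (U⁰_{2k})²(a(U⁰_{2k})² + 2(T⁰_{2k})² + 4T⁰_{2k}U⁰_{2k})`. -/
noncomputable def TU (m : ℕ) : Polynomial ℤ × Polynomial ℤ :=
  if m = 0 then (0, 0)
  else if m = 1 then (X, -1)
  else if m % 2 = 0 then TUeven (m / 2 - 1)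
  else ((X : Polynomial ℤ) * (TUeven (m / 2 - 1)).2 ^ 2,
        (TUeven (m / 2 - 1)).1 * ((TUeven (m / 2 - 1)).1 + 2 * (TUeven (m / 2 - 1)).2))

lemma two_mul_ne (U : Polynomial ℤ) (hU : U ≠ 0) : (2 : Polynomial ℤ) * U ≠ 0 :=
  mul_ne_zero (by norm_num) hU

lemma natDegree_two_mul (U : Polynomial ℤ) (hU : U ≠ 0) :
    ((2 : Polynomial ℤ) * U).natDegree = U.natDegree := by
  rw [natDegree_mul (by norm_num) hU]
  simp

lemma TUeven_spec (k : ℕ) :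
    (TUeven k).1 ≠ 0 ∧ (TUeven k).2 ≠ 0 ∧
    (TUeven k).1.natDegree < (TUeven k).2.natDegree ∧
    (((TUeven k).2.natDegree : ℚ) = ((4 : ℚ) ^ (k + 1) - 1) / 3) := by
  induction k with
  | zero =>
      have h2 : (X - 2 : Polynomial ℤ) = X - C 2 := by simp
      have hd : (X - 2 : Polynomial ℤ).natDegree = 1 := by
        rw [h2]; exact natDegree_X_sub_C 2
      refine ⟨one_ne_zero, ?_, ?_, ?_⟩
      · intro h
        rw [show (TUeven 0).2 = X - 2 from rfl, h2] at h
        exact X_sub_C_ne_zero 2 h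
      · show (1 : Polynomial ℤ).natDegree < (X - 2 : Polynomial ℤ).natDegree
        simp [hd]
      · show (((X - 2 : Polynomial ℤ).natDegree : ℚ)) = _
        rw [hd]; norm_num
  | succ k ih =>
      obtain ⟨hT, hU, hlt, hdeg⟩ := ih
      set T := (TUeven k).1 with hTdef
      set U := (TUeven k).2 with hUdef
      set t := T.natDegree with htdef
      set u := U.natDegree with hudef
      have h2U : ((2 : Polynomial ℤ) * U).natDegree = u := natDegree_two_mul U hU
      have hlt2 : T.natDegree < ((2 : Polynomial ℤ) * U).natDegree := by rw [h2U]; exact hlt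
      have haddd : (T + 2 * U).natDegree = u := by
        rw [natDegree_add_eq_right_of_natDegree_lt hlt2, h2U]
      have hupos : 1 ≤ u := Nat.one_le_iff_ne_zero.mpr (by omega)
      have hadd0 : T + 2 * U ≠ 0 := by
        intro h
        rw [h, natDegree_zero] at haddd
        omega
      -- the new pair
      have hT1 : (TUeven (k + 1)).1 = T ^ 2 * (T + 2 * U) ^ 2 := rfl
      have hU1 : (TUeven (k + 1)).2 =
          U ^ 2 * (X * U ^ 2 + 2 * T ^ 2 + 4 * T * U) := rfl
      have hXU2 : ((X : Polynomial ℤ) * U ^ 2).natDegree = 1 + 2 * u := by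
        rw [natDegree_mul X_ne_zero (pow_ne_zero 2 hU), natDegree_X, natDegree_pow]
      have hB : ((2 : Polynomial ℤ) * T ^ 2 + 4 * T * U).natDegree ≤ t + u := by
        refine le_trans (natDegree_add_le _ _) (max_le ?_ ?_)
        · calc ((2 : Polynomial ℤ) * T ^ 2).natDegree ≤
              (2 : Polynomial ℤ).natDegree + (T ^ 2).natDegree := natDegree_mul_le
          _ ≤ t + u := by
              rw [natDegree_pow]
              simp only [natDegree_ofNat]
              omega
        · calc ((4 : Polynomial ℤ) * T * U).natDegree ≤
              ((4 : Polynomial ℤ) * T).natDegree + U.natDegree := natDegree_mul_le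
          _ ≤ t + u := by
              have : ((4 : Polynomial ℤ) * T).natDegree ≤
                  (4 : Polynomial ℤ).natDegree + T.natDegree := natDegree_mul_le
              simp only [natDegree_ofNat] at this
              omega
      have hBlt : ((2 : Polynomial ℤ) * T ^ 2 + 4 * T * U).natDegree <
          ((X : Polynomial ℤ) * U ^ 2).natDegree := by
        rw [hXU2]; omega
      have hsum : ((X : Polynomial ℤ) * U ^ 2 + 2 * T ^ 2 + 4 * T * U).natDegree
          = 1 + 2 * u := by
        rw [add_assoc, natDegree_add_eq_left_of_natDegree_lt hBlt, hXU2]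
      have hsum0 : (X : Polynomial ℤ) * U ^ 2 + 2 * T ^ 2 + 4 * T * U ≠ 0 := by
        intro h
        rw [h, natDegree_zero] at hsum
        omega
      have hT1d : (TUeven (k + 1)).1.natDegree = 2 * t + 2 * u := by
        rw [hT1, natDegree_mul (pow_ne_zero 2 hT) (pow_ne_zero 2 hadd0),
          natDegree_pow, natDegree_pow, haddd]
      have hU1d : (TUeven (k + 1)).2.natDegree = 4 * u + 1 := by
        rw [hU1, natDegree_mul (pow_ne_zero 2 hU) hsum0, natDegree_pow, hsum]
        ring
      refine ⟨?_, ?_, ?_, ?_⟩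
      · rw [hT1]; exact mul_ne_zero (pow_ne_zero 2 hT) (pow_ne_zero 2 hadd0)
      · rw [hU1]; exact mul_ne_zero (pow_ne_zero 2 hU) hsum0
      · rw [hT1d, hU1d]; omega
      · rw [hU1d]
        push_cast
        rw [show ((u : ℚ)) = ((4 : ℚ) ^ (k + 1) - 1) / 3 from hdeg]
        ring

theorem degree_U_even_and_T_odd (k : ℕ) (hk : 1 ≤ k) :
    (((TU (2 * k)).2.natDegree : ℚ) = ((2 : ℚ) ^ (2 * k) - 1) / 3) ∧
    (((TU (2 * k + 1)).1.natDegree : ℚ) = ((2 : ℚ) ^ (2 * k + 1) + 1) / 3) := by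
  obtain ⟨j, rfl⟩ : ∃ j, k = j + 1 := ⟨k - 1, by omega⟩
  obtain ⟨hT, hU, hlt, hdeg⟩ := TUeven_spec j
  have h1 : TU (2 * (j + 1)) = TUeven j := by
    have : 2 * (j + 1) / 2 - 1 = j := by omega
    rw [TU]
    simp [Nat.mul_mod_right, this, Nat.mul_ne_zero, show 2 * (j + 1) ≠ 1 by omega,
      show 2 * (j + 1) ≠ 0 by omega]
  have h2 : TU (2 * (j + 1) + 1) =
      ((X : Polynomial ℤ) * (TUeven j).2 ^ 2,
       (TUeven j).1 * ((TUeven j).1 + 2 * (TUeven j).2)) := by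
    have hj : (2 * (j + 1) + 1) / 2 - 1 = j := by omega
    rw [TU]
    simp [Nat.mul_mod_right, hj, show 2 * (j + 1) + 1 ≠ 1 by omega,
      show 2 * (j + 1) + 1 ≠ 0 by omega, show (2 * (j + 1) + 1) % 2 = 1 by omega]
  have htwo : ((2 : ℚ)) ^ (2 * (j + 1)) = (4 : ℚ) ^ (j + 1) := by
    rw [pow_mul]; norm_num
  constructor
  · rw [h1, hdeg, htwo]
  · rw [h2]
    have hXU2 : ((X : Polynomial ℤ) * (TUeven j).2 ^ 2).natDegree =
        1 + 2 * (TUeven j).2.natDegree := by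
      rw [natDegree_mul X_ne_zero (pow_ne_zero 2 hU), natDegree_X, natDegree_pow]
    show ((((X : Polynomial ℤ) * (TUeven j).2 ^ 2).natDegree : ℚ)) = _
    rw [hXU2]
    push_cast
    rw [hdeg, pow_succ (2:ℚ) (2 * (j + 1)), htwo]
    ring
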